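/- arXiv:1810.08502 — 2 statements merged into one kernel-verified Lean document; each statement's English description precedes it below -/
import Mathlib

section
/- For x, y in the open unit disk, the squared norm of the Möbius transformation T_x(y) = (|y-x|² x - (1-|x|²)(y-x)) / (1 - 2⟨x,y⟩ + |x|²|y|²) satisfies |T_x(y)|² = |x-y|² / (1 - 2⟨x,y⟩ + |x|²|y|²). -/
theorem stmt_3 (x y : EuclideanSpace ℝ (Fin 2)) (hx : ‖x‖ < 1) (hy : ‖y‖ < 1) :
    ‖(1 - 2 * (inner ℝ x y : ℝ) + ‖x‖ ^ 2 * ‖y‖ ^ 2)⁻¹ •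
        (‖y - x‖ ^ 2 • x - (1 - ‖x‖ ^ 2) • (y - x))‖ ^ 2
      = ‖x - y‖ ^ 2 / (1 - 2 * (inner ℝ x y : ℝ) + ‖x‖ ^ 2 * ‖y‖ ^ 2) := by
  have hx2 : ‖x‖ ^ 2 < 1 := by nlinarith [norm_nonneg x]
  have hy2 : ‖y‖ ^ 2 < 1 := by nlinarith [norm_nonneg y]
  have hxy : ‖x - y‖ ^ 2 = ‖x‖ ^ 2 - 2 * (inner ℝ x y : ℝ) + ‖y‖ ^ 2 :=
    norm_sub_sq_real x y
  have hyx : ‖y - x‖ ^ 2 = ‖y‖ ^ 2 - 2 * (inner ℝ x y : ℝ) + ‖x‖ ^ 2 := by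
    rw [norm_sub_sq_real, real_inner_comm]
  have hV : 0 < 1 - 2 * (inner ℝ x y : ℝ) + ‖x‖ ^ 2 * ‖y‖ ^ 2 := by
    nlinarith [sq_nonneg ‖x - y‖, hxy]
  have hnum : ‖‖y - x‖ ^ 2 • x - (1 - ‖x‖ ^ 2) • (y - x)‖ ^ 2
      = ‖x - y‖ ^ 2 * (1 - 2 * (inner ℝ x y : ℝ) + ‖x‖ ^ 2 * ‖y‖ ^ 2) := by
    rw [← real_inner_self_eq_norm_sq]
    simp only [inner_sub_left, inner_sub_right, real_inner_smul_left,
      real_inner_smul_right]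
    simp only [real_inner_self_eq_norm_sq]
    have hc : (inner ℝ y x : ℝ) = (inner ℝ x y : ℝ) := real_inner_comm x y
    rw [hc, hyx, hxy]; ring
  rw [norm_smul, Real.norm_eq_abs, abs_of_pos (inv_pos.mpr hV), mul_pow,
    hnum]
  set V : ℝ := 1 - 2 * (inner ℝ x y : ℝ) + ‖x‖ ^ 2 * ‖y‖ ^ 2 with hVdef
  field_simp
end

section
/- Moment bound for Q: for f ≥ 0 on the unit disk with hyperbolic mass M = ∫ f dV and p-moment I = ∫ p f dV, one has ∫∫ (1+|x||y|)/(1-|x||y|) f(x)f(y) dV_x dV_y ≤ M(I + M). -/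
open MeasureTheory

/-- The hyperbolic volume measure on the Poincaré disk, viewed as a measure on ℝ²
supported on the unit ball, with density (2/(1-|x|²))² w.r.t. Lebesgue measure. -/
noncomputable def hypVol : Measure (EuclideanSpace ℝ (Fin 2)) :=
  (volume.restrict (Metric.ball (0 : EuclideanSpace ℝ (Fin 2)) 1)).withDensity
    (fun x => ENNReal.ofReal ((2 / (1 - ‖x‖ ^ 2)) ^ 2))

/-- The exponential weight p(x) = 2|x|²/(1-|x|²). -/
noncomputable def hypP (x : EuclideanSpace ℝ (Fin 2)) : ℝ :=
  2 * ‖x‖ ^ 2 / (1 - ‖x‖ ^ 2)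

instance : SFinite hypVol := by unfold hypVol; infer_instance

lemma key (a b : ℝ) (ha0 : 0 ≤ a) (ha1 : a < 1) (hb0 : 0 ≤ b) (hb1 : b < 1) :
    (1 + a*b)/(1 - a*b) ≤ 2*a^2/(1-a^2)/2 + 2*b^2/(1-b^2)/2 + 1 := by
  have hab : 0 < 1 - a*b := by nlinarith
  have ha2 : 0 < 1 - a^2 := by nlinarith
  have hb2 : 0 < 1 - b^2 := by nlinarith
  rw [div_le_iff₀ hab]
  have e1 : 2*a^2/(1-a^2)/2 = a^2/(1-a^2) := by ring
  have e2 : 2*b^2/(1-b^2)/2 = b^2/(1-b^2) := by ring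
  rw [e1, e2]
  have h1 : (1 - a*b)^2 ≥ (1-a^2)*(1-b^2) := by nlinarith [sq_nonneg (a-b)]
  have h2 : a^2/(1-a^2) = 1/(1-a^2) - 1 := by field_simp; ring
  have h3 : b^2/(1-b^2) = 1/(1-b^2) - 1 := by field_simp; ring
  rw [h2, h3]
  have h4 : (1-a*b) * ((1-a^2)+(1-b^2)) ≥ 2*(1-a^2)*(1-b^2) := by
    nlinarith [mul_pos ha2 hb2, mul_pos hab (mul_pos ha2 hb2), sq_nonneg ((1-a^2)-(1-b^2)), sq_nonneg (a-b), mul_pos hab hab]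
  have h5 : 2/(1-a*b) ≤ 1/(1-a^2) + 1/(1-b^2) := by
    rw [div_add_div _ _ (ne_of_gt ha2) (ne_of_gt hb2), div_le_div_iff₀ hab (mul_pos ha2 hb2)]
    nlinarith [h4]
  have h6 : (2/(1-a*b)) * (1-a*b) = 2 := by field_simp
  nlinarith [mul_le_mul_of_nonneg_right h5 (le_of_lt hab)]

lemma hypVol_ae_lt_one : ∀ᵐ x ∂hypVol, ‖x‖ < 1 := by
  have h : ∀ᵐ x ∂(volume.restrict (Metric.ball (0 : EuclideanSpace ℝ (Fin 2)) 1)),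
      ‖x‖ < 1 := by
    filter_upwards [ae_restrict_mem measurableSet_ball] with x hx
    simpa [Metric.mem_ball, dist_zero_right] using hx
  exact (withDensity_absolutelyContinuous _ _).ae_le h

lemma prod_ae_lt_one :
    ∀ᵐ z : EuclideanSpace ℝ (Fin 2) × EuclideanSpace ℝ (Fin 2) ∂(hypVol.prod hypVol),
      ‖z.1‖ < 1 ∧ ‖z.2‖ < 1 := by
  have h := hypVol_ae_lt_one
  rw [ae_iff] at h ⊢
  apply measure_mono_null
    (t := ({x : EuclideanSpace ℝ (Fin 2) | ¬ ‖x‖ < 1} ×ˢ Set.univ) ∪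
      (Set.univ ×ˢ {y : EuclideanSpace ℝ (Fin 2) | ¬ ‖y‖ < 1}))
  · intro z hz
    simp only [Set.mem_setOf_eq, not_and_or] at hz
    rcases hz with h1 | h2
    · exact Or.inl ⟨h1, Set.mem_univ _⟩
    · exact Or.inr ⟨Set.mem_univ _, h2⟩
  · apply measure_union_null
    · rw [Measure.prod_prod]
      apply mul_eq_zero.mpr; left; simpa using h
    · rw [Measure.prod_prod]
      apply mul_eq_zero.mpr; right; simpa using h

theorem stmt_18 (f : EuclideanSpace ℝ (Fin 2) → ℝ) (M I : ℝ)
    (hf0 : ∀ x, 0 ≤ f x) (hf_int : Integrable f hypVol)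
    (hfM : ∫ x, f x ∂hypVol = M)
    (hpf_int : Integrable (fun x => hypP x * f x) hypVol)
    (hI : ∫ x, hypP x * f x ∂hypVol = I)
    (hQ_int : Integrable
      (fun z : EuclideanSpace ℝ (Fin 2) × EuclideanSpace ℝ (Fin 2) =>
        (1 + ‖z.1‖ * ‖z.2‖) / (1 - ‖z.1‖ * ‖z.2‖) * (f z.1 * f z.2))
      (hypVol.prod hypVol)) :
    ∫ z : EuclideanSpace ℝ (Fin 2) × EuclideanSpace ℝ (Fin 2),
        (1 + ‖z.1‖ * ‖z.2‖) / (1 - ‖z.1‖ * ‖z.2‖) * (f z.1 * f z.2)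
        ∂(hypVol.prod hypVol)
      ≤ M * (I + M) := by
  set g : EuclideanSpace ℝ (Fin 2) × EuclideanSpace ℝ (Fin 2) → ℝ :=
    fun z => (1/2) * ((hypP z.1 * f z.1) * f z.2) + (1/2) * (f z.1 * (hypP z.2 * f z.2))
      + f z.1 * f z.2 with hg
  have hg_int : Integrable g (hypVol.prod hypVol) :=
    (((hpf_int.mul_prod hf_int).const_mul _).add
      ((hf_int.mul_prod hpf_int).const_mul _)).add (hf_int.mul_prod hf_int)
  have hbound : ∀ᵐ z ∂(hypVol.prod hypVol),
      (1 + ‖z.1‖ * ‖z.2‖) / (1 - ‖z.1‖ * ‖z.2‖) * (f z.1 * f z.2) ≤ g z := by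
    filter_upwards [prod_ae_lt_one] with z hz
    obtain ⟨h1, h2⟩ := hz
    have hk := key ‖z.1‖ ‖z.2‖ (norm_nonneg _) h1 (norm_nonneg _) h2
    have hff : 0 ≤ f z.1 * f z.2 := mul_nonneg (hf0 _) (hf0 _)
    have := mul_le_mul_of_nonneg_right hk hff
    calc (1 + ‖z.1‖ * ‖z.2‖) / (1 - ‖z.1‖ * ‖z.2‖) * (f z.1 * f z.2)
        ≤ (2*‖z.1‖^2/(1-‖z.1‖^2)/2 + 2*‖z.2‖^2/(1-‖z.2‖^2)/2 + 1) * (f z.1 * f z.2) := this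
      _ = g z := by simp only [hg, hypP]; ring
  calc ∫ z : EuclideanSpace ℝ (Fin 2) × EuclideanSpace ℝ (Fin 2),
        (1 + ‖z.1‖ * ‖z.2‖) / (1 - ‖z.1‖ * ‖z.2‖) * (f z.1 * f z.2)
        ∂(hypVol.prod hypVol)
      ≤ ∫ z, g z ∂(hypVol.prod hypVol) := integral_mono_ae hQ_int hg_int hbound
    _ = M * (I + M) := by
        have e1 : ∫ z : EuclideanSpace ℝ (Fin 2) × EuclideanSpace ℝ (Fin 2),
            hypP z.1 * f z.1 * f z.2 ∂(hypVol.prod hypVol) = I * M := by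
          have h := integral_prod_mul (μ := hypVol) (ν := hypVol)
            (f := fun x => hypP x * f x) (g := f)
          simpa [hfM, hI] using h
        have e2 : ∫ z : EuclideanSpace ℝ (Fin 2) × EuclideanSpace ℝ (Fin 2),
            f z.1 * (hypP z.2 * f z.2) ∂(hypVol.prod hypVol) = M * I := by
          have h := integral_prod_mul (μ := hypVol) (ν := hypVol)
            (f := f) (g := fun x => hypP x * f x)
          simpa [hfM, hI] using h
        have e3 : ∫ z : EuclideanSpace ℝ (Fin 2) × EuclideanSpace ℝ (Fin 2),
            f z.1 * f z.2 ∂(hypVol.prod hypVol) = M * M := by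
          have h := integral_prod_mul (μ := hypVol) (ν := hypVol) (f := f) (g := f)
          simpa [hfM] using h
        have h12 : Integrable (fun z : EuclideanSpace ℝ (Fin 2) × EuclideanSpace ℝ (Fin 2) =>
            1/2 * (hypP z.1 * f z.1 * f z.2) + 1/2 * (f z.1 * (hypP z.2 * f z.2)))
            (hypVol.prod hypVol) :=
          ((hpf_int.mul_prod hf_int).const_mul ((1:ℝ)/2)).add
            ((hf_int.mul_prod hpf_int).const_mul ((1:ℝ)/2))
        simp only [hg]
        rw [integral_add h12 (hf_int.mul_prod hf_int),
          integral_add ((hpf_int.mul_prod hf_int).const_mul ((1:ℝ)/2))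
          ((hf_int.mul_prod hpf_int).const_mul ((1:ℝ)/2)),
          integral_const_mul, integral_const_mul, e1, e2, e3]
        ring
end
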